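/- An injective map f: S → ℤ^N on an orthohedral set S ⊆ ℤ^N is a pei-injection if and only if every orthant L of S contains a commensurable suborthant L' ⊆ L on which f is given by the restriction of an isometry onto f(L') ⊆ ℤ^N. -/

import Mathlib

open Pointwise

namespace PeiPaper

/-- Points of the face of the standard orthant spanned by the canonical basis vectors in `Y`. -/
def stdFace (N : ℕ) (Y : Finset (Fin N)) : Set (Fin N → ℤ) :=
  {v | (∀ i, 0 ≤ v i) ∧ ∀ i, i ∉ Y → v i = 0}

/-- Integral orthogonal matrix. -/
def IsOrthMat {N : ℕ} (A : Matrix (Fin N) (Fin N) ℤ) : Prop :=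
  A * A.transpose = 1

/-- `L` is an integral orthant of rank `k` in `ℤ^N`: an affine-orthogonal image of a
rank-`k` face of the standard orthant. -/
def IsOrthantOfRank {N : ℕ} (L : Set (Fin N → ℤ)) (k : ℕ) : Prop :=
  ∃ (a : Fin N → ℤ) (A : Matrix (Fin N) (Fin N) ℤ) (Y : Finset (Fin N)),
    IsOrthMat A ∧ Y.card = k ∧ L = (fun v => a + A.mulVec v) '' stdFace N Y

def IsOrthant {N : ℕ} (L : Set (Fin N → ℤ)) : Prop := ∃ k, IsOrthantOfRank L k

/-- `S` is orthohedral: a finite union of integral orthants. -/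
def IsOrthohedral {N : ℕ} (S : Set (Fin N → ℤ)) : Prop :=
  ∃ 𝓛 : Set (Set (Fin N → ℤ)), 𝓛.Finite ∧ (∀ L ∈ 𝓛, IsOrthant L) ∧ S = ⋃₀ 𝓛

/-- The rank of a set: the maximal rank of an orthant contained in it. -/
noncomputable def orthRank {N : ℕ} (S : Set (Fin N → ℤ)) : ℕ :=
  sSup {k | ∃ L, IsOrthantOfRank L k ∧ L ⊆ S}

/-- Commensurability: the intersection is nonempty and has the same rank as both sets. -/
def Commensurable {N : ℕ} (L L' : Set (Fin N → ℤ)) : Prop :=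
  (L ∩ L').Nonempty ∧ orthRank L = orthRank (L ∩ L') ∧ orthRank L' = orthRank (L ∩ L')

/-- The rank-`k` orthants contained in `S`. -/
def germSet {N : ℕ} (S : Set (Fin N → ℤ)) (k : ℕ) : Set (Set (Fin N → ℤ)) :=
  {L | IsOrthantOfRank L k ∧ L ⊆ S}

/-- The rank-`k` germs of `S`: commensurability classes of rank-`k` orthants of `S`. -/
def Germ {N : ℕ} (S : Set (Fin N → ℤ)) (k : ℕ) : Type _ :=
  Quot (fun L L' : germSet S k => Commensurable L.1 L'.1)

def germOf {N : ℕ} (S : Set (Fin N → ℤ)) (k : ℕ) (L : germSet S k) : Germ S k :=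
  Quot.mk _ L

/-- The number of rank-`k` germs of `S` (as a natural number; `0` if infinite). -/
noncomputable def heightAt {N : ℕ} (S : Set (Fin N → ℤ)) (k : ℕ) : ℕ :=
  Nat.card (Germ S k)

/-- The height of an orthohedral set: the number of germs of maximal rank. -/
noncomputable def height {N : ℕ} (S : Set (Fin N → ℤ)) : ℕ :=
  heightAt S (orthRank S)

/-- `f` is (the restriction of) an isometry of `ℤ^N` on `L`. -/
def IsometricOn {N : ℕ} (f : (Fin N → ℤ) → (Fin N → ℤ)) (L : Set (Fin N → ℤ)) : Prop :=
  ∃ (a : Fin N → ℤ) (A : Matrix (Fin N) (Fin N) ℤ),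
    IsOrthMat A ∧ ∀ x ∈ L, f x = a + A.mulVec x

/-- `f` is (the restriction of) a translation on `L`. -/
def TranslationOn {N : ℕ} (f : (Fin N → ℤ) → (Fin N → ℤ)) (L : Set (Fin N → ℤ)) : Prop :=
  ∃ a : Fin N → ℤ, ∀ x ∈ L, f x = a + x

/-- `f` is a piecewise-Euclidean-isometric map on `S`. -/
def IsPeiMapOn {N : ℕ} (S : Set (Fin N → ℤ)) (f : (Fin N → ℤ) → (Fin N → ℤ)) : Prop :=
  ∃ 𝓛 : Set (Set (Fin N → ℤ)), 𝓛.Finite ∧ (∀ L ∈ 𝓛, IsOrthant L) ∧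
    S = ⋃₀ 𝓛 ∧ 𝓛.PairwiseDisjoint id ∧ ∀ L ∈ 𝓛, IsometricOn f L

/-- `f` is a piecewise-Euclidean-translation map on `S`. -/
def IsPetMapOn {N : ℕ} (S : Set (Fin N → ℤ)) (f : (Fin N → ℤ) → (Fin N → ℤ)) : Prop :=
  ∃ 𝓛 : Set (Set (Fin N → ℤ)), 𝓛.Finite ∧ (∀ L ∈ 𝓛, IsOrthant L) ∧
    S = ⋃₀ 𝓛 ∧ 𝓛.PairwiseDisjoint id ∧ ∀ L ∈ 𝓛, TranslationOn f L

def IsPeiIso {N : ℕ} (S S' : Set (Fin N → ℤ)) (f : (Fin N → ℤ) → (Fin N → ℤ)) : Prop :=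
  IsPeiMapOn S f ∧ Set.InjOn f S ∧ f '' S = S'

def PeiIsomorphic {N : ℕ} (S S' : Set (Fin N → ℤ)) : Prop := ∃ f, IsPeiIso S S' f

def IsPetIso {N : ℕ} (S S' : Set (Fin N → ℤ)) (f : (Fin N → ℤ) → (Fin N → ℤ)) : Prop :=
  IsPetMapOn S f ∧ Set.InjOn f S ∧ f '' S = S'

def PetIsomorphic {N : ℕ} (S S' : Set (Fin N → ℤ)) : Prop := ∃ f, IsPetIso S S' f

/-- A pei-permutation of `S`: a permutation of `ℤ^N` supported on `S` which is pei on `S`. -/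
def IsPeiPerm {N : ℕ} (S : Set (Fin N → ℤ)) (g : Equiv.Perm (Fin N → ℤ)) : Prop :=
  IsPeiMapOn S ⇑g ∧ ∀ x ∉ S, g x = x

/-- The element `g` has rank at most `k`: it is supported on an orthohedral set of rank `≤ k`. -/
def rankLE {N : ℕ} (g : Equiv.Perm (Fin N → ℤ)) (k : ℕ) : Prop :=
  ∃ T : Set (Fin N → ℤ), IsOrthohedral T ∧ orthRank T ≤ k ∧ ∀ x ∉ T, g x = x

/-- `g` fixes every rank-`k` germ of `S`. -/
def FixesGerm {N : ℕ} (S : Set (Fin N → ℤ)) (k : ℕ) (g : Equiv.Perm (Fin N → ℤ)) : Prop :=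
  ∀ L, IsOrthantOfRank L k → L ⊆ S →
    ∃ L', IsOrthantOfRank L' k ∧ L' ⊆ L ∧ Commensurable L L' ∧
      IsometricOn (⇑g) L' ∧ Commensurable (⇑g '' L') L

/-- `g` fixes every rank-`k` germ of `S` and acts on its tangent coset by a translation. -/
def TranslatesGerm {N : ℕ} (S : Set (Fin N → ℤ)) (k : ℕ) (g : Equiv.Perm (Fin N → ℤ)) : Prop :=
  ∀ L, IsOrthantOfRank L k → L ⊆ S →
    ∃ L' a, IsOrthantOfRank L' k ∧ L' ⊆ L ∧ Commensurable L L' ∧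
      (∀ x ∈ L', g x = a + x) ∧ Commensurable (⇑g '' L') L

/-- `σ` is the map induced by `g` on the rank-`k` germs of `S`. -/
def InducesGermMap {N : ℕ} (S : Set (Fin N → ℤ)) (k : ℕ) (g : Equiv.Perm (Fin N → ℤ))
    (σ : Germ S k → Germ S k) : Prop :=
  ∀ L : germSet S k, ∃ (L'' : Set (Fin N → ℤ)) (M : germSet S k),
    IsOrthantOfRank L'' k ∧ L'' ⊆ L.1 ∧ Commensurable L.1 L'' ∧
    M.1 = ⇑g '' L'' ∧ σ (germOf S k L) = germOf S k M

/-- A finitary permutation which is even (has sign `1` on a finite invariant subset). -/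
def IsEvenFinitary {α : Type*} (σ : Equiv.Perm α) : Prop :=
  ∃ (F : Finset α) (σF : Equiv.Perm F),
    (∀ a ∉ F, σ a = a) ∧ (∀ a : F, σ (a : α) = (σF a : α)) ∧
    @Equiv.Perm.sign F (Classical.decEq _) inferInstance σF = 1

/-- `g` induces an even finitary permutation on the rank-`k` germs of `S`. -/
def IsEvenOnGerms {N : ℕ} (S : Set (Fin N → ℤ)) (k : ℕ) (g : Equiv.Perm (Fin N → ℤ)) : Prop :=
  ∃ σ : Equiv.Perm (Germ S k), InducesGermMap S k g ⇑σ ∧ IsEvenFinitary σ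

/-- Ordering of germs (of arbitrary ranks): `p ≤ q` if they have representatives `L ⊆ L'`. -/
def germLE {N : ℕ} (S : Set (Fin N → ℤ)) (p q : Σ k, Germ S k) : Prop :=
  ∃ (L : germSet S p.1) (L' : germSet S q.1),
    germOf S p.1 L = p.2 ∧ germOf S q.1 L' = q.2 ∧ L.1 ⊆ L'.1

/-- A maximal germ of `S`. -/
def IsMaxGerm {N : ℕ} (S : Set (Fin N → ℤ)) (p : Σ k, Germ S k) : Prop :=
  ∀ q, germLE S p q → germLE S q p

/-- A `0`-based orthant. -/
def IsBasedOrthant {N : ℕ} (L0 : Set (Fin N → ℤ)) : Prop :=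
  ∃ (A : Matrix (Fin N) (Fin N) ℤ) (Y : Finset (Fin N)),
    IsOrthMat A ∧ L0 = (fun v => A.mulVec v) '' stdFace N Y

/-- Two (oriented) parallel orthants. -/
def ParallelOrthants {N : ℕ} (L L' : Set (Fin N → ℤ)) : Prop :=
  ∃ a : Fin N → ℤ, L' = a +ᵥ L

/-- The indicator image `S_τ` of `S`: the union of the `0`-based parallel translates of
the orthants contained in `S`. -/
def indicatorImage {N : ℕ} (S : Set (Fin N → ℤ)) : Set (Fin N → ℤ) :=
  ⋃₀ {L0 | IsBasedOrthant L0 ∧ ∃ a : Fin N → ℤ, (a +ᵥ L0) ⊆ S}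

/-- The height function `h_S`: the number of maximal germs of `S` whose indicator is `L0`. -/
noncomputable def hFun {N : ℕ} (S : Set (Fin N → ℤ)) (L0 : Set (Fin N → ℤ)) : ℕ :=
  Nat.card {p : Σ k, Germ S k //
    IsMaxGerm S p ∧ ∃ L : germSet S p.1, germOf S p.1 L = p.2 ∧ ∃ a : Fin N → ℤ, L.1 = a +ᵥ L0}

/-- `S` is quasi-normal: the maximal based orthants of `S_τ` are exactly the support of `h_S`. -/
def QuasiNormal {N : ℕ} (S : Set (Fin N → ℤ)) : Prop :=
  ∀ L0 : Set (Fin N → ℤ),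
    (IsBasedOrthant L0 ∧ L0 ⊆ indicatorImage S ∧
      ∀ L1, IsBasedOrthant L1 → L1 ⊆ indicatorImage S → L0 ⊆ L1 → L1 ⊆ L0)
    ↔ (IsBasedOrthant L0 ∧ 0 < hFun S L0)

/-- The germ `q` of `S'` is the image of the germ `p` of `S` under the injective pei-map `f`. -/
def GermMapsTo {N : ℕ} (f : (Fin N → ℤ) → (Fin N → ℤ)) (S S' : Set (Fin N → ℤ))
    (p : Σ k, Germ S k) (q : Σ k, Germ S' k) : Prop :=
  p.1 = q.1 ∧ ∃ (L : germSet S p.1) (L'' : Set (Fin N → ℤ)) (M : germSet S' q.1),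
    germOf S p.1 L = p.2 ∧ IsOrthantOfRank L'' p.1 ∧ L'' ⊆ L.1 ∧ Commensurable L.1 L'' ∧
    M.1 = f '' L'' ∧ germOf S' q.1 M = q.2

/-- A stack of `h` parallel rank-`n` orthants. -/
def IsStack {N : ℕ} (S : Set (Fin N → ℤ)) (n h : ℕ) : Prop :=
  ∃ (L0 : Set (Fin N → ℤ)) (a : Fin h → (Fin N → ℤ)),
    IsOrthantOfRank L0 n ∧
    (Pairwise fun i j => Disjoint (a i +ᵥ L0) (a j +ᵥ L0)) ∧
    S = ⋃ i, a i +ᵥ L0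

/-- A coordinate half-space of `ℤ^N`. -/
def IsHalfSpace {N : ℕ} (H : Set (Fin N → ℤ)) : Prop :=
  ∃ (i : Fin N) (c : ℤ), H = {x | x i ≤ c} ∨ H = {x | c ≤ x i}

/-- The canonical embedding `ℤ^N → ℤ^{N+1}`. -/
def emb (N : ℕ) (x : Fin N → ℤ) : Fin (N + 1) → ℤ :=
  fun i => if h : (i : ℕ) < N then x ⟨i, h⟩ else 0

/-- The sum of all matrix entries of a finitely supported family of vectors. -/
noncomputable def totalSum (k : ℕ) (Γ : Type*) : (Γ →₀ (Fin k → ℤ)) →+ ℤ :=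
  Finsupp.liftAddHom (fun _ => ∑ i : Fin k, Pi.evalAddMonoidHom (fun _ => ℤ) i)

/-- The clique (flag) complex of a graph. -/
def cliqueComplex {V : Type*} (G : SimpleGraph V) : Set (Finset V) :=
  {s | s.Nonempty ∧ G.IsClique (s : Set V)}

/-- The geometric realization of a simplicial complex on vertex set `V`. -/
def realization {V : Type*} (K : Set (Finset V)) : Set (V → ℝ) :=
  {f | (∀ v, 0 ≤ f v) ∧ ∃ s ∈ K, Function.support f ⊆ ↑s ∧ ∑ v ∈ s, f v = 1}

/-- A wedge (bouquet) of `n`-spheres indexed by `ι`, with basepoint `b`. -/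
noncomputable def wedgeSpheres (ι : Type) (n : ℕ)
    (b : Metric.sphere (0 : EuclideanSpace ℝ (Fin (n + 1))) 1) : Type :=
  Quot (fun p q : Unit ⊕ (ι × Metric.sphere (0 : EuclideanSpace ℝ (Fin (n + 1))) 1) =>
    (Sum.elim (fun _ => True) (fun pr => pr.2 = b) p) ∧
    (Sum.elim (fun _ => True) (fun qr => qr.2 = b) q))

noncomputable instance (ι : Type) (n : ℕ) (b : Metric.sphere (0 : EuclideanSpace ℝ (Fin (n + 1))) 1) :
    TopologicalSpace (wedgeSpheres ι n b) :=
  letI : TopologicalSpace ι := ⊥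
  instTopologicalSpaceQuot

/-!
An integral orthogonal matrix is a signed permutation matrix, so an orthant is a product of
coordinate rays `{aⱼ + sⱼ n | n ∈ ℕ}` with `sⱼ ∈ {-1, 0, 1}`, and its rank is the number of
nonzero `sⱼ`. Cut `ℤ^N` into grid cells, the fibres of the coordinatewise clamp
`x ↦ max (-B) (min x B)`. Once `B` exceeds every corner coordinate `|aⱼ|` in sight, each orthant is
a union of cells, and a rank-`k` orthant contains exactly one cell of rank `k`: its top cell, far
out along all of its rays.

If `f` is pei, the top cell of `L` lies in one of the pieces and serves as `L'`. Conversely, induct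
on the rank: cut `L` into cells adapted to both `L` and the given `L'`; the top cell of `L` is also
the top cell of `L'`, on which `f` is isometric, and every other cell has lower rank.
-/

open Filter
open scoped Finset

section Partition

variable {α : Type*} {P : Set α → Prop}

def HasFinitePartition (P : Set α → Prop) (T : Set α) : Prop :=
  ∃ 𝓛 : Set (Set α), 𝓛.Finite ∧ (∀ L ∈ 𝓛, P L) ∧ 𝓛.PairwiseDisjoint id ∧ ⋃₀ 𝓛 = T

lemma HasFinitePartition.of_pred {T : Set α} (h : P T) : HasFinitePartition P T :=
  ⟨{T}, Set.finite_singleton T, by simpa using h, Set.pairwiseDisjoint_singleton T id,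
    Set.sUnion_singleton T⟩

lemma HasFinitePartition.sUnion {𝓣 : Set (Set α)} (h𝓣 : 𝓣.Finite)
    (hdisj : 𝓣.PairwiseDisjoint id) (h : ∀ T ∈ 𝓣, HasFinitePartition P T) :
    HasFinitePartition P (⋃₀ 𝓣) := by
  choose! F hFfin hFP hFdisj hFunion using h
  refine ⟨⋃ T ∈ 𝓣, F T, h𝓣.biUnion hFfin, ?_, ?_, ?_⟩
  · simp only [Set.mem_iUnion₂]
    rintro L ⟨T, hT, hL⟩
    exact hFP T hT L hL
  · refine Set.PairwiseDisjoint.biUnion (hdisj.mono_on fun T hT => ?_) hFdisj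
    exact (iSup₂_le fun L hL => Set.subset_sUnion_of_mem (t := id L) hL).trans (hFunion T hT).le
  · simp only [Set.sUnion_iUnion]
    rw [Set.sUnion_eq_biUnion]
    exact Set.iUnion₂_congr hFunion

end Partition

section Orthant

variable {N : ℕ}

def coordRay (a : ℤ) (s : SignType) : Set ℤ := Set.range fun n : ℕ => a + (s : ℤ) * n

@[simp] lemma coordRay_zero (a : ℤ) : coordRay a 0 = {a} := by
  ext t
  simp [coordRay, eq_comm]

@[simp] lemma coordRay_one (a : ℤ) : coordRay a 1 = Set.Ici a := by
  ext t
  simp only [coordRay, SignType.coe_one, one_mul, Set.mem_range, Set.mem_Ici]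
  exact ⟨by rintro ⟨n, rfl⟩; omega, fun h => ⟨(t - a).toNat, by omega⟩⟩

@[simp] lemma coordRay_neg_one (a : ℤ) : coordRay a (-1) = Set.Iic a := by
  ext t
  simp only [coordRay, SignType.coe_neg_one, neg_one_mul, Set.mem_range, Set.mem_Iic]
  exact ⟨by rintro ⟨n, rfl⟩; omega, fun h => ⟨(a - t).toNat, by omega⟩⟩

lemma mem_coordRay_self (a : ℤ) (s : SignType) : a ∈ coordRay a s := ⟨0, by simp⟩

lemma coordRay_infinite_iff {a : ℤ} {s : SignType} : (coordRay a s).Infinite ↔ s ≠ 0 := by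
  rcases s.trichotomy with rfl | rfl | rfl <;> simp [Set.Ici_infinite, Set.Iic_infinite]

def orthantOf (a : Fin N → ℤ) (s : Fin N → SignType) : Set (Fin N → ℤ) :=
  Set.univ.pi fun j => coordRay (a j) (s j)

lemma orthantOf_nonempty (a : Fin N → ℤ) (s : Fin N → SignType) : (orthantOf a s).Nonempty :=
  Set.univ_pi_nonempty_iff.2 fun j => ⟨a j, mem_coordRay_self _ _⟩

lemma support_subset_of_orthantOf_subset {a a' : Fin N → ℤ} {s s' : Fin N → SignType}
    (h : orthantOf a' s' ⊆ orthantOf a s) :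
    ({j | s' j ≠ 0} : Finset (Fin N)) ⊆ ({j | s j ≠ 0} : Finset (Fin N)) := by
  have hray := (Set.pi_subset_pi_iff.1 h).resolve_right (orthantOf_nonempty a' s').ne_empty
  intro j
  simp only [Finset.mem_filter, Finset.mem_univ, true_and]
  rw [← coordRay_infinite_iff (a := a' j), ← coordRay_infinite_iff (a := a j)]
  exact fun hj => hj.mono (hray j (Set.mem_univ j))

lemma support_eq_of_orthantOf_subset {a a' : Fin N → ℤ} {s s' : Fin N → SignType}
    (h : orthantOf a' s' ⊆ orthantOf a s) (hcard : #{j | s' j ≠ 0} = #{j | s j ≠ 0}) (j : Fin N) :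
    s' j ≠ 0 ↔ s j ≠ 0 := by
  have := Finset.eq_of_subset_of_card_le (support_subset_of_orthantOf_subset h) hcard.ge
  simpa using Finset.ext_iff.1 this j

lemma exists_eq_one_or_neg_one_of_sum_mul_self {ι : Type*} [Fintype ι] [DecidableEq ι]
    {v : ι → ℤ} (h : ∑ i, v i * v i = 1) : ∃ i, (v i = 1 ∨ v i = -1) ∧ ∀ j ≠ i, v j = 0 := by
  obtain ⟨i, hi⟩ : ∃ i, v i ≠ 0 := by
    by_contra! h0
    simp [h0] at h
  rw [← Finset.add_sum_erase _ _ (Finset.mem_univ i)] at h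
  have hpos : 0 < v i * v i := mul_self_pos.2 hi
  have hrest : 0 ≤ ∑ j ∈ Finset.univ.erase i, v j * v j :=
    Finset.sum_nonneg fun j _ => mul_self_nonneg (v j)
  have hzero : ∑ j ∈ Finset.univ.erase i, v j * v j = 0 := by linarith
  refine ⟨i, mul_self_eq_one_iff.1 (by linarith), fun j hj => mul_self_eq_zero.1 ?_⟩
  exact (Finset.sum_eq_zero_iff_of_nonneg fun j _ => mul_self_nonneg (v j)).1 hzero j
    (Finset.mem_erase.2 ⟨hj, Finset.mem_univ j⟩)

lemma IsOrthMat.exists_signedPerm {A : Matrix (Fin N) (Fin N) ℤ} (hA : IsOrthMat A) :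
    ∃ (σ : Equiv.Perm (Fin N)) (ε : Fin N → SignType), (∀ i, ε i ≠ 0) ∧
      ∀ i j, A i j = if j = σ i then (ε i : ℤ) else 0 := by
  have hdot : ∀ i i', ∑ j, A i j * A i' j = if i = i' then 1 else 0 := fun i i' => by
    simpa [Matrix.mul_apply, Matrix.one_apply] using congrFun (congrFun hA i) i'
  choose τ hτ hτ0 using fun i => exists_eq_one_or_neg_one_of_sum_mul_self (by simpa using hdot i i)
  have hτinj : Function.Injective τ := by
    intro i i' h
    by_contra hne
    have hii' := hdot i i'
    rw [if_neg hne, Finset.sum_eq_single (τ i) (fun j _ hj => by rw [hτ0 i j hj, zero_mul])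
      (by simp)] at hii'
    rcases mul_eq_zero.1 hii' with h0 | h0
    · rcases hτ i with h1 | h1 <;> omega
    · rw [h] at h0
      rcases hτ i' with h1 | h1 <;> omega
  refine ⟨Equiv.ofBijective τ (Finite.injective_iff_bijective.1 hτinj),
    fun i => if A i (τ i) = 1 then 1 else -1, fun i => by dsimp only; split_ifs <;> decide,
    fun i j => ?_⟩
  simp only [Equiv.ofBijective_apply]
  split_ifs with hj h1
  · simp [hj, h1]
  · subst hj
    simpa [h1] using hτ i
  · exact hτ0 i j hj

lemma mulVec_apply_of_signedPerm {A : Matrix (Fin N) (Fin N) ℤ} {σ : Equiv.Perm (Fin N)}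
    {ε : Fin N → SignType} (hA : ∀ i j, A i j = if j = σ i then (ε i : ℤ) else 0)
    (v : Fin N → ℤ) (i : Fin N) : A.mulVec v i = ε i * v (σ i) := by
  simp [Matrix.mulVec, dotProduct, hA]

lemma image_stdFace_eq_orthantOf {A : Matrix (Fin N) (Fin N) ℤ} {σ : Equiv.Perm (Fin N)}
    {ε : Fin N → SignType} (hA : ∀ i j, A i j = if j = σ i then (ε i : ℤ) else 0)
    (a : Fin N → ℤ) (Y : Finset (Fin N)) :
    (fun v => a + A.mulVec v) '' stdFace N Y = orthantOf a fun i => if σ i ∈ Y then ε i else 0 := by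
  ext x
  simp only [Set.mem_image, orthantOf, Set.mem_univ_pi, coordRay, Set.mem_range]
  constructor
  · rintro ⟨v, ⟨hv0, hvY⟩, rfl⟩ i
    refine ⟨(v (σ i)).toNat, ?_⟩
    rw [Pi.add_apply, mulVec_apply_of_signedPerm hA]
    split_ifs with h
    · rw [Int.toNat_of_nonneg (hv0 _)]
    · simp [hvY _ h]
  · intro hx
    choose n hn using hx
    refine ⟨fun j => if j ∈ Y then n (σ.symm j) else 0,
      ⟨fun j => by dsimp only; split_ifs <;> simp, fun j hj => by simp [hj]⟩, funext fun i => ?_⟩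
    rw [Pi.add_apply, mulVec_apply_of_signedPerm hA, ← hn i]
    split_ifs <;> simp

theorem isOrthantOfRank_iff {L : Set (Fin N → ℤ)} {k : ℕ} :
    IsOrthantOfRank L k ↔ ∃ a s, #{j | s j ≠ 0} = k ∧ L = orthantOf a s := by
  constructor
  · rintro ⟨a, A, Y, hA, rfl, rfl⟩
    obtain ⟨σ, ε, hε, hAσ⟩ := hA.exists_signedPerm
    refine ⟨a, _, ?_, image_stdFace_eq_orthantOf hAσ a Y⟩
    have hsupp : ({i | (if σ i ∈ Y then ε i else 0) ≠ 0} : Finset (Fin N)) =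
        Y.map σ.symm.toEmbedding := by
      ext i
      simp [Finset.mem_map_equiv, hε]
    rw [hsupp, Finset.card_map]
  · rintro ⟨a, s, rfl, rfl⟩
    set ε : Fin N → SignType := fun i => if s i = 0 then 1 else s i
    have hε : ∀ i, (ε i : ℤ) * ε i = 1 := fun i => by
      rcases (s i).trichotomy with h | h | h <;> simp [ε, h]
    have hA : IsOrthMat (Matrix.diagonal fun i => (ε i : ℤ)) := by
      simp [IsOrthMat, Matrix.diagonal_mul_diagonal, hε]
    refine ⟨a, _, ({j | s j ≠ 0} : Finset (Fin N)), hA, rfl, ?_⟩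
    rw [image_stdFace_eq_orthantOf (σ := Equiv.refl _) (ε := ε)
      (fun i j => by simp [Matrix.diagonal_apply, eq_comm])]
    congr 1
    funext i
    by_cases h : s i = 0 <;> simp [ε, h]

lemma isOrthant_iff {L : Set (Fin N → ℤ)} : IsOrthant L ↔ ∃ a s, L = orthantOf a s :=
  ⟨fun ⟨_, hk⟩ => by
    obtain ⟨a, s, -, hL⟩ := isOrthantOfRank_iff.1 hk
    exact ⟨a, s, hL⟩,
  fun ⟨a, s, hL⟩ => ⟨_, isOrthantOfRank_iff.2 ⟨a, s, rfl, hL⟩⟩⟩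

lemma orthRank_orthantOf (a : Fin N → ℤ) (s : Fin N → SignType) :
    orthRank (orthantOf a s) = #{j | s j ≠ 0} := by
  refine IsGreatest.csSup_eq ⟨⟨_, isOrthantOfRank_iff.2 ⟨a, s, rfl, rfl⟩, subset_rfl⟩, ?_⟩
  rintro r ⟨L, hL, hLsub⟩
  obtain ⟨a', s', rfl, rfl⟩ := isOrthantOfRank_iff.1 hL
  exact Finset.card_le_card (support_subset_of_orthantOf_subset hLsub)

lemma commensurable_iff_of_subset {L L' : Set (Fin N → ℤ)} (h : L' ⊆ L) (hne : L'.Nonempty) :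
    Commensurable L L' ↔ orthRank L = orthRank L' := by
  simp [Commensurable, Set.inter_eq_right.2 h, hne]

end Orthant

section Grid

variable {N : ℕ}

def snap (B : ℕ) (x : Fin N → ℤ) : Fin N → ℤ := fun j => max (-B) (min (x j) B)

def gridCell (B : ℕ) (x : Fin N → ℤ) : Set (Fin N → ℤ) := snap B ⁻¹' {snap B x}

def cellSign (B : ℕ) (x : Fin N → ℤ) (j : Fin N) : SignType :=
  if (B : ℤ) ≤ x j then 1 else if x j ≤ -B then -1 else 0

lemma mem_gridCell_self (B : ℕ) (x : Fin N → ℤ) : x ∈ gridCell B x := rfl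

lemma cellSign_ne_zero_iff {B : ℕ} {x : Fin N → ℤ} {j : Fin N} :
    cellSign B x j ≠ 0 ↔ (B : ℤ) ≤ |x j| := by
  rw [le_abs']
  unfold cellSign
  split_ifs <;> simp <;> omega

lemma gridCell_eq_orthantOf {B : ℕ} (hB : 0 < B) (x : Fin N → ℤ) :
    gridCell B x = orthantOf (snap B x) (cellSign B x) := by
  ext y
  simp only [gridCell, Set.mem_preimage, Set.mem_singleton_iff, funext_iff, orthantOf,
    Set.mem_univ_pi]
  refine forall_congr' fun j => ?_
  simp only [snap, cellSign]
  split_ifs <;> simp <;> omega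

lemma isOrthantOfRank_gridCell {B : ℕ} (hB : 0 < B) (x : Fin N → ℤ) :
    IsOrthantOfRank (gridCell B x) #{j | cellSign B x j ≠ 0} :=
  isOrthantOfRank_iff.2 ⟨_, _, rfl, gridCell_eq_orthantOf hB x⟩

def IsGridAligned (B : ℕ) (T : Set (Fin N → ℤ)) : Prop := ∀ x ∈ T, gridCell B x ⊆ T

lemma isGridAligned_orthantOf {B : ℕ} {a : Fin N → ℤ} (s : Fin N → SignType)
    (ha : ∀ j, |a j| < B) : IsGridAligned B (orthantOf a s) := by
  intro x hx y hy j _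
  have hxj := hx j trivial
  have hyj := congrFun hy j
  have := abs_lt.1 (ha j)
  simp only [snap] at hyj
  rcases (s j).trichotomy with h | h | h <;> simp [h] at hxj ⊢ <;> omega

lemma eventually_abs_lt (a : Fin N → ℤ) : ∀ᶠ B : ℕ in atTop, ∀ j, |a j| < B :=
  eventually_all.2 fun _ => (tendsto_natCast_atTop_atTop (R := ℤ)).eventually_gt_atTop _

lemma IsOrthant.eventually_isGridAligned {L : Set (Fin N → ℤ)} (hL : IsOrthant L) :
    ∀ᶠ B in atTop, IsGridAligned B L := by
  obtain ⟨a, s, rfl⟩ := isOrthant_iff.1 hL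
  exact (eventually_abs_lt a).mono fun B => isGridAligned_orthantOf s

lemma IsOrthohedral.eventually_isGridAligned {S : Set (Fin N → ℤ)} (hS : IsOrthohedral S) :
    ∀ᶠ B in atTop, IsGridAligned B S := by
  obtain ⟨𝓛, hfin, horth, rfl⟩ := hS
  filter_upwards [hfin.eventually_all.2 fun L hL => (horth L hL).eventually_isGridAligned]
    with B hB x ⟨L, hL, hx⟩
  exact (hB L hL x hx).trans (Set.subset_sUnion_of_mem hL)

lemma IsGridAligned.hasFinitePartition {P : Set (Fin N → ℤ) → Prop} {B : ℕ}
    {T : Set (Fin N → ℤ)} (hT : IsGridAligned B T)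
    (h : ∀ x ∈ T, HasFinitePartition P (gridCell B x)) : HasFinitePartition P T := by
  have hcover : ⋃₀ (gridCell B '' T) = T :=
    subset_antisymm (Set.sUnion_subset (Set.forall_mem_image.2 hT))
      fun x hx => ⟨_, Set.mem_image_of_mem _ hx, mem_gridCell_self B x⟩
  rw [← hcover]
  refine HasFinitePartition.sUnion ?_ ?_ (Set.forall_mem_image.2 h)
  · refine ((Set.finite_Icc (fun _ => -(B : ℤ)) fun _ => (B : ℤ)).image
      fun c => snap B ⁻¹' {c}).subset ?_
    rintro _ ⟨x, -, rfl⟩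
    exact ⟨snap B x, ⟨fun _ => le_max_left _ _, fun _ => max_le (by simp) (min_le_right _ _)⟩, rfl⟩
  · rintro _ ⟨x, -, rfl⟩ _ ⟨y, -, rfl⟩ hne
    refine Set.disjoint_left.2 fun z (hzx : snap B z = snap B x) (hzy : snap B z = snap B y) => ?_
    exact hne (congrArg (fun c => snap B ⁻¹' {c}) (hzx.symm.trans hzy))

def farPoint (a : Fin N → ℤ) (s : Fin N → SignType) (B : ℕ) : Fin N → ℤ :=
  fun j => a j + s j * (2 * B : ℕ)

lemma farPoint_mem (a : Fin N → ℤ) (s : Fin N → SignType) (B : ℕ) :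
    farPoint a s B ∈ orthantOf a s :=
  fun _ _ => ⟨2 * B, rfl⟩

lemma cellSign_farPoint_ne_zero_iff {B : ℕ} {a : Fin N → ℤ} {s : Fin N → SignType}
    (ha : ∀ j, |a j| < B) (j : Fin N) : cellSign B (farPoint a s B) j ≠ 0 ↔ s j ≠ 0 := by
  rw [cellSign_ne_zero_iff, le_abs']
  have := abs_lt.1 (ha j)
  rcases (s j).trichotomy with h | h | h <;> simp [farPoint, h] <;> omega

lemma snap_eq_of_cellSign_ne_zero_iff {B : ℕ} {a x y : Fin N → ℤ} {s : Fin N → SignType}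
    (ha : ∀ j, |a j| < B) (hx : x ∈ orthantOf a s) (hy : y ∈ orthantOf a s)
    (hxs : ∀ j, cellSign B x j ≠ 0 ↔ s j ≠ 0) (hys : ∀ j, cellSign B y j ≠ 0 ↔ s j ≠ 0) :
    snap B x = snap B y := by
  funext j
  have hxj := hx j trivial
  have hyj := hy j trivial
  have hxs := hxs j
  have hys := hys j
  have := abs_lt.1 (ha j)
  rw [cellSign_ne_zero_iff, le_abs'] at hxs hys
  simp only [snap]
  rcases (s j).trichotomy with h | h | h <;> simp [h] at hxj hyj hxs hys <;> omega

end Grid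

section Pei

variable {N : ℕ} {S : Set (Fin N → ℤ)} {f : (Fin N → ℤ) → (Fin N → ℤ)}

lemma IsometricOn.mono {L L' : Set (Fin N → ℤ)} (h : IsometricOn f L) (hsub : L' ⊆ L) :
    IsometricOn f L' :=
  let ⟨a, A, hA, hf⟩ := h
  ⟨a, A, hA, fun x hx => hf x (hsub hx)⟩

lemma IsPeiMapOn.exists_commensurable_isometricOn (hf : IsPeiMapOn S f)
    {L : Set (Fin N → ℤ)} (hL : IsOrthant L) (hLS : L ⊆ S) :
    ∃ L', IsOrthant L' ∧ L' ⊆ L ∧ Commensurable L L' ∧ IsometricOn f L' := by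
  obtain ⟨𝓛, hfin, horth, rfl, -, hiso⟩ := hf
  obtain ⟨a, s, rfl⟩ := isOrthant_iff.1 hL
  obtain ⟨B, hB, ha, h𝓛⟩ := ((eventually_gt_atTop 0).and ((eventually_abs_lt a).and
    (hfin.eventually_all.2 fun M hM => (horth M hM).eventually_isGridAligned))).exists
  obtain ⟨M, hM, hfarM⟩ := hLS (farPoint_mem a s B)
  have hcell := gridCell_eq_orthantOf hB (farPoint a s B)
  have hsub := isGridAligned_orthantOf s ha _ (farPoint_mem a s B)
  refine ⟨_, isOrthant_iff.2 ⟨_, _, hcell⟩, hsub, ?_, (hiso M hM).mono (h𝓛 M hM _ hfarM)⟩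
  rw [commensurable_iff_of_subset hsub ⟨_, mem_gridCell_self _ _⟩, hcell, orthRank_orthantOf,
    orthRank_orthantOf]
  simp only [cellSign_farPoint_ne_zero_iff ha]

lemma hasFinitePartition_isometricOn_of_isOrthantOfRank
    (h : ∀ L, IsOrthant L → L ⊆ S →
      ∃ L', IsOrthant L' ∧ L' ⊆ L ∧ Commensurable L L' ∧ IsometricOn f L')
    (k : ℕ) : ∀ L, IsOrthantOfRank L k → L ⊆ S →
      HasFinitePartition (fun M => IsOrthant M ∧ IsometricOn f M) L := by
  induction k using Nat.strong_induction_on with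
  | _ k IH =>
  intro L hL hLS
  obtain ⟨L', hL', hL'L, hcomm, hiso⟩ := h L ⟨k, hL⟩ hLS
  obtain ⟨a, s, rfl, rfl⟩ := isOrthantOfRank_iff.1 hL
  obtain ⟨a', s', rfl⟩ := isOrthant_iff.1 hL'
  rw [commensurable_iff_of_subset hL'L (orthantOf_nonempty a' s'), orthRank_orthantOf,
    orthRank_orthantOf] at hcomm
  obtain ⟨B, hB, ha, ha'⟩ := ((eventually_gt_atTop 0).and
    ((eventually_abs_lt a).and (eventually_abs_lt a'))).exists
  refine (isGridAligned_orthantOf s ha).hasFinitePartition fun x hx => ?_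
  have hsub := isGridAligned_orthantOf s ha x hx
  rw [gridCell_eq_orthantOf hB] at hsub
  rcases (Finset.card_le_card (support_subset_of_orthantOf_subset hsub)).lt_or_eq with hlt | heq
  · exact IH _ hlt _ (isOrthantOfRank_gridCell hB x)
      ((isGridAligned_orthantOf s ha x hx).trans hLS)
  have htop : snap B x = snap B (farPoint a' s' B) :=
    snap_eq_of_cellSign_ne_zero_iff ha hx (hL'L (farPoint_mem a' s' B))
      (support_eq_of_orthantOf_subset hsub heq)
      fun j => (cellSign_farPoint_ne_zero_iff ha' j).trans
        (support_eq_of_orthantOf_subset hL'L hcomm.symm j)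
  have hxL' : gridCell B x ⊆ orthantOf a' s' := by
    rw [gridCell, htop]
    exact isGridAligned_orthantOf s' ha' _ (farPoint_mem a' s' B)
  exact .of_pred ⟨⟨_, isOrthantOfRank_gridCell hB x⟩, hiso.mono hxL'⟩

lemma isPeiMapOn_of_forall_exists_commensurable_isometricOn (hS : IsOrthohedral S)
    (h : ∀ L, IsOrthant L → L ⊆ S →
      ∃ L', IsOrthant L' ∧ L' ⊆ L ∧ Commensurable L L' ∧ IsometricOn f L') :
    IsPeiMapOn S f := by
  obtain ⟨B, hB, hSB⟩ := ((eventually_gt_atTop 0).and hS.eventually_isGridAligned).exists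
  obtain ⟨𝓛, hfin, hP, hdisj, hunion⟩ := hSB.hasFinitePartition fun x hx =>
    hasFinitePartition_isometricOn_of_isOrthantOfRank h _ _ (isOrthantOfRank_gridCell hB x)
      (hSB x hx)
  exact ⟨𝓛, hfin, fun L hL => (hP L hL).1, hunion.symm, hdisj, fun L hL => (hP L hL).2⟩

end Pei

theorem stmt4_general {N : ℕ} (S : Set (Fin N → ℤ)) (hS : IsOrthohedral S)
    (f : (Fin N → ℤ) → (Fin N → ℤ)) :
    IsPeiMapOn S f ↔ ∀ L, IsOrthant L → L ⊆ S →
      ∃ L', IsOrthant L' ∧ L' ⊆ L ∧ Commensurable L L' ∧ IsometricOn f L' :=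
  ⟨fun hf _ hL hLS => hf.exists_commensurable_isometricOn hL hLS,
    isPeiMapOn_of_forall_exists_commensurable_isometricOn hS⟩

/-- An injective map on an orthohedral set is pei iff every orthant of `S`
contains a commensurable suborthant on which it restricts to an isometry. -/
theorem stmt4 {N : ℕ} (S : Set (Fin N → ℤ)) (hS : IsOrthohedral S)
    (f : (Fin N → ℤ) → (Fin N → ℤ)) (hinj : Set.InjOn f S) :
    IsPeiMapOn S f ↔ ∀ L, IsOrthant L → L ⊆ S →
      ∃ L', IsOrthant L' ∧ L' ⊆ L ∧ Commensurable L L' ∧ IsometricOn f L' :=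
  stmt4_general S hS f

end PeiPaper
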